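/- For every invertible symmetric real 4×4 matrix g and every nonzero covector ξ ∈ ℝ⁴, the set of symmetric real 4×4 matrices h satisfying h·(g⁻¹ξ) = (tr(g⁻¹h)/2)·ξ (i.e. h(ξ*,v) − (tr_g h/2) g(ξ*,v) = 0 for all v ∈ ℝ⁴, where ξ* = g⁻¹ξ) is a linear subspace of dimension 6 of the 10-dimensional space of symmetric 4×4 matrices. (This is the fiberwise content of Lemma 3.5: the bundle 𝕊_Y has rank 6.) -/

import Mathlib

open Matrix

section Aux

def symT : Submodule ℝ (Matrix (Fin 4) (Fin 4) ℝ) where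
  carrier := {h | h.IsSymm}
  add_mem' := fun ha hb => ha.add hb
  zero_mem' := Matrix.isSymm_zero
  smul_mem' := fun c _ h => h.smul c

def sidx : Fin 4 → Fin 4 → Fin 10 :=
  ![![0,1,2,3],![1,4,5,6],![2,5,7,8],![3,6,8,9]]

def pidx : Fin 10 → Fin 4 × Fin 4 :=
  ![(0,0),(0,1),(0,2),(0,3),(1,1),(1,2),(1,3),(2,2),(2,3),(3,3)]

lemma sidx_pidx : ∀ p : Fin 10, sidx (pidx p).1 (pidx p).2 = p := by decide

lemma sidx_symm : ∀ i j : Fin 4, sidx j i = sidx i j := by decide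

lemma pidx_sidx : ∀ i j : Fin 4,
    ((pidx (sidx i j)).1 = i ∧ (pidx (sidx i j)).2 = j) ∨
    ((pidx (sidx i j)).1 = j ∧ (pidx (sidx i j)).2 = i) := by decide

def bmat (f : Fin 10 → ℝ) : Matrix (Fin 4) (Fin 4) ℝ := fun i j => f (sidx i j)

lemma bmat_symm (f : Fin 10 → ℝ) : (bmat f).IsSymm := by
  ext i j; simp only [bmat, Matrix.transpose_apply, sidx_symm]

noncomputable def symEquiv : symT ≃ₗ[ℝ] (Fin 10 → ℝ) where
  toFun h p := (h : Matrix (Fin 4) (Fin 4) ℝ) (pidx p).1 (pidx p).2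
  map_add' a b := rfl
  map_smul' c a := rfl
  invFun f := ⟨bmat f, bmat_symm f⟩
  left_inv := by
    rintro ⟨h, hh⟩
    ext i j
    show h (pidx (sidx i j)).1 (pidx (sidx i j)).2 = h i j
    rcases pidx_sidx i j with ⟨h1, h2⟩ | ⟨h1, h2⟩
    · rw [h1, h2]
    · rw [h1, h2]; exact (Matrix.IsSymm.apply hh j i).symm
  right_inv := by
    intro f; funext p
    show f (sidx (pidx p).1 (pidx p).2) = f p
    rw [sidx_pidx]

lemma finrank_symT : Module.finrank ℝ symT = 10 := by
  rw [symEquiv.finrank_eq]; simp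

noncomputable def phiMap (g : Matrix (Fin 4) (Fin 4) ℝ) (ξ : Fin 4 → ℝ) :
    Matrix (Fin 4) (Fin 4) ℝ →ₗ[ℝ] (Fin 4 → ℝ) where
  toFun h := h *ᵥ (g⁻¹ *ᵥ ξ) - ((g⁻¹ * h).trace / 2) • ξ
  map_add' a b := by
    simp only [Matrix.add_mulVec, Matrix.mul_add, Matrix.trace_add, add_div, add_smul]
    abel
  map_smul' c a := by
    simp only [RingHom.id_apply, Matrix.smul_mulVec, Matrix.mul_smul, Matrix.trace_smul,
      smul_eq_mul, mul_div_assoc, mul_smul, smul_sub]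

lemma vecMulVec_transpose' (a b : Fin 4 → ℝ) : (vecMulVec a b)ᵀ = vecMulVec b a := by
  ext i j; simp [vecMulVec_apply, mul_comm]

lemma vecMulVec_mulVec' (a b v : Fin 4 → ℝ) : vecMulVec a b *ᵥ v = (b ⬝ᵥ v) • a := by
  funext i
  simp only [mulVec, dotProduct, vecMulVec_apply, Pi.smul_apply, smul_eq_mul, Finset.sum_mul]
  exact Finset.sum_congr rfl fun j _ => by ring

lemma trace_mul_vecMulVec (M : Matrix (Fin 4) (Fin 4) ℝ) (a b : Fin 4 → ℝ) :
    (M * vecMulVec a b).trace = b ⬝ᵥ (M *ᵥ a) := by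
  simp only [Matrix.trace, Matrix.diag_apply, Matrix.mul_apply, vecMulVec_apply, dotProduct,
    mulVec, Finset.mul_sum]
  exact Finset.sum_congr rfl fun i _ => Finset.sum_congr rfl fun j _ => by ring

def dotv (v : Fin 4 → ℝ) : (Fin 4 → ℝ) →ₗ[ℝ] ℝ where
  toFun b := b ⬝ᵥ v
  map_add' a b := add_dotProduct a b v
  map_smul' c a := smul_dotProduct c a v

lemma exists_pair (G : Matrix (Fin 4) (Fin 4) ℝ) (hG : IsUnit G) (v : Fin 4 → ℝ) (hv : v ≠ 0) :
    ∃ a b : Fin 4 → ℝ, a ⬝ᵥ v = 0 ∧ b ⬝ᵥ v = 0 ∧ a ⬝ᵥ (G *ᵥ b) ≠ 0 := by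
  by_contra hcon
  push_neg at hcon
  have hvv : v ⬝ᵥ v ≠ 0 := fun h => hv (dotProduct_self_eq_zero.mp h)
  have key : ∀ b, b ⬝ᵥ v = 0 → ∃ c : ℝ, G *ᵥ b = c • v := by
    intro b hb
    set x := G *ᵥ b with hx
    set c : ℝ := (x ⬝ᵥ v) / (v ⬝ᵥ v) with hc
    refine ⟨c, ?_⟩
    have ha : (x - c • v) ⬝ᵥ v = 0 := by
      rw [sub_dotProduct, smul_dotProduct, hc, smul_eq_mul]
      field_simp
      ring
    have hax : (x - c • v) ⬝ᵥ x = 0 := hcon _ b ha hb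
    have h0 : (x - c • v) ⬝ᵥ (x - c • v) = 0 := by
      rw [dotProduct_sub, hax, dotProduct_smul, smul_eq_mul, dotProduct_comm] at *
      rw [ha]
      ring
    have := dotProduct_self_eq_zero.mp h0
    exact (sub_eq_zero.mp this)
  have hdet : IsUnit G.det := (Matrix.isUnit_iff_isUnit_det G).mp hG
  have hinj : Function.Injective (Matrix.mulVecLin G) := by
    intro x y hxy
    have h2 := congrArg (fun z => G⁻¹ *ᵥ z) hxy
    simpa [Matrix.mulVecLin_apply, Matrix.mulVec_mulVec, Matrix.nonsing_inv_mul G hdet] using h2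
  set W := LinearMap.ker (dotv v) with hWdef
  have hrange : LinearMap.range (dotv v) = ⊤ := by
    rw [LinearMap.range_eq_top]
    intro r
    refine ⟨(r / (v ⬝ᵥ v)) • v, ?_⟩
    show ((r / (v ⬝ᵥ v)) • v) ⬝ᵥ v = r
    rw [smul_dotProduct, smul_eq_mul]
    field_simp
  have hW : Module.finrank ℝ W = 3 := by
    have hrn := LinearMap.finrank_range_add_finrank_ker (dotv v)
    rw [hrange, finrank_top, Module.finrank_self, ← hWdef] at hrn
    have e2 : Module.finrank ℝ (Fin 4 → ℝ) = 4 := by simp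
    rw [e2] at hrn
    omega
  have hmap : W.map (Matrix.mulVecLin G) ≤ Submodule.span ℝ {v} := by
    rintro x ⟨b, hb, rfl⟩
    obtain ⟨c, hc⟩ := key b hb
    rw [Matrix.mulVecLin_apply, hc]
    exact Submodule.smul_mem _ c (Submodule.mem_span_singleton_self v)
  have h31 : (3 : ℕ) ≤ 1 := by
    calc (3 : ℕ) = Module.finrank ℝ (W.map (Matrix.mulVecLin G)) := by
          rw [← (Submodule.equivMapOfInjective _ hinj W).finrank_eq, hW]
      _ ≤ Module.finrank ℝ (Submodule.span ℝ ({v} : Set (Fin 4 → ℝ))) :=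
          Submodule.finrank_mono hmap
      _ = 1 := finrank_span_singleton hv
  omega

end Aux

/-- Lemma 3.5 (fiberwise): the constraint subspace 𝕊 has dimension 6 inside the
10-dimensional space of symmetric 4×4 matrices. -/
theorem stmt_0 (g : Matrix (Fin 4) (Fin 4) ℝ) (hg : IsUnit g) (hgsymm : g.IsSymm)
    (ξ : Fin 4 → ℝ) (hξ : ξ ≠ 0) :
    ∃ S T : Submodule ℝ (Matrix (Fin 4) (Fin 4) ℝ),
      (S : Set (Matrix (Fin 4) (Fin 4) ℝ)) =
        {h | h.IsSymm ∧ h *ᵥ (g⁻¹ *ᵥ ξ) = (((g⁻¹ * h).trace) / 2) • ξ} ∧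
      (T : Set (Matrix (Fin 4) (Fin 4) ℝ)) = {h | h.IsSymm} ∧
      S ≤ T ∧ Module.finrank ℝ S = 6 ∧ Module.finrank ℝ T = 10 := by
  have hdet : IsUnit g.det := (Matrix.isUnit_iff_isUnit_det g).mp hg
  set v := g⁻¹ *ᵥ ξ with hvdef
  have hv : v ≠ 0 := by
    intro h0
    apply hξ
    have h2 : g *ᵥ v = g *ᵥ (0 : Fin 4 → ℝ) := by rw [h0]
    rw [hvdef, Matrix.mulVec_mulVec, Matrix.mul_nonsing_inv g hdet, Matrix.one_mulVec,
      Matrix.mulVec_zero] at h2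
    exact h2
  have hGs : (g⁻¹)ᵀ = g⁻¹ := by rw [Matrix.transpose_nonsing_inv, hgsymm]
  set Φ := phiMap g ξ with hΦdef
  set f' := Φ.comp symT.subtype with hf'def
  -- surjectivity of f'
  have hsurj : Function.Surjective f' := by
    intro w
    obtain ⟨i0, hi0⟩ : ∃ i, v i ≠ 0 := by
      by_contra hcon; push_neg at hcon; exact hv (funext hcon)
    set u : Fin 4 → ℝ := (v i0)⁻¹ • (Pi.single i0 1 : Fin 4 → ℝ) with hu
    have huv : u ⬝ᵥ v = 1 := by
      rw [hu, smul_dotProduct, single_dotProduct, smul_eq_mul, one_mul,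
        inv_mul_cancel₀ hi0]
    set k := vecMulVec w u + vecMulVec u w - (w ⬝ᵥ v) • vecMulVec u u with hk
    have hks : k.IsSymm := by
      show kᵀ = k
      rw [hk, transpose_sub, transpose_add, transpose_smul,
        vecMulVec_transpose', vecMulVec_transpose', vecMulVec_transpose']
      abel
    have hkv : k *ᵥ v = w := by
      have h1 : vecMulVec w u *ᵥ v = w := by rw [vecMulVec_mulVec', huv, one_smul]
      have h2 : vecMulVec u w *ᵥ v = (w ⬝ᵥ v) • u := vecMulVec_mulVec' u w v
      have h3 : vecMulVec u u *ᵥ v = (1 : ℝ) • u := by rw [vecMulVec_mulVec', huv]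
      rw [hk, Matrix.sub_mulVec, Matrix.add_mulVec, h1, h2, Matrix.smul_mulVec, h3,
        one_smul]
      abel
    obtain ⟨a, b, hav, hbv, hab⟩ :=
      exists_pair g⁻¹ (Matrix.isUnit_nonsing_inv_iff.mpr hg) v hv
    set m := vecMulVec a b + vecMulVec b a with hm
    have hms : m.IsSymm := by
      show mᵀ = m
      rw [hm, transpose_add, vecMulVec_transpose', vecMulVec_transpose', add_comm]
    have hmv : m *ᵥ v = 0 := by
      rw [hm, Matrix.add_mulVec, vecMulVec_mulVec', vecMulVec_mulVec', hav, hbv,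
        zero_smul, zero_smul, add_zero]
    have hsymdot : b ⬝ᵥ (g⁻¹ *ᵥ a) = a ⬝ᵥ (g⁻¹ *ᵥ b) := by
      rw [Matrix.dotProduct_mulVec, ← hGs, Matrix.vecMul_transpose, dotProduct_comm, hGs]
    have hτm : (g⁻¹ * m).trace = 2 * (a ⬝ᵥ (g⁻¹ *ᵥ b)) := by
      rw [hm, Matrix.mul_add, Matrix.trace_add, trace_mul_vecMulVec, trace_mul_vecMulVec,
        hsymdot]
      ring
    have hτm0 : (g⁻¹ * m).trace ≠ 0 := by
      rw [hτm]
      exact mul_ne_zero two_ne_zero hab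
    set s : ℝ := -((g⁻¹ * k).trace) / (g⁻¹ * m).trace with hs
    set h := k + s • m with hh
    have hhs : h.IsSymm := hks.add (hms.smul s)
    have hτh : (g⁻¹ * h).trace = 0 := by
      rw [hh, Matrix.mul_add, Matrix.trace_add, Matrix.mul_smul, Matrix.trace_smul, hs,
        smul_eq_mul]
      rw [div_mul_cancel₀ _ hτm0]
      ring
    refine ⟨⟨h, hhs⟩, ?_⟩
    show h *ᵥ (g⁻¹ *ᵥ ξ) - ((g⁻¹ * h).trace / 2) • ξ = w
    rw [hτh, ← hvdef, hh, Matrix.add_mulVec, Matrix.smul_mulVec, hkv, hmv, smul_zero,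
      add_zero]
    simp
  -- rank computation
  have hrn := LinearMap.finrank_range_add_finrank_ker f'
  rw [LinearMap.range_eq_top.mpr hsurj, finrank_top, finrank_symT] at hrn
  have e2 : Module.finrank ℝ (Fin 4 → ℝ) = 4 := by simp
  rw [e2] at hrn
  refine ⟨(LinearMap.ker f').map symT.subtype, symT, ?_, rfl,
    Submodule.map_subtype_le _ _, ?_, finrank_symT⟩
  · ext h
    simp only [SetLike.mem_coe, Set.mem_setOf_eq]
    constructor
    · rintro ⟨⟨y, hy⟩, hker, rfl⟩
      refine ⟨hy, ?_⟩
      have h0 : Φ y = 0 := hker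
      have h1 : y *ᵥ (g⁻¹ *ᵥ ξ) - ((g⁻¹ * y).trace / 2) • ξ = 0 := h0
      exact sub_eq_zero.mp h1
    · rintro ⟨hsym, heq⟩
      exact ⟨⟨h, hsym⟩, show Φ h = 0 from sub_eq_zero.mpr heq, rfl⟩
  · rw [Submodule.finrank_map_subtype_eq]
    omega
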